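/- Let E be an n×n real matrix of rank r with SVD-partition U = [U₁ U₂], V = [V₁ V₂], S. Let B_x (n×u), B_z (z×u), A_xv (n×v), A_zv (z×v) and Φ (v×z) be real matrices such that I − A_zv·Φ is invertible. If the stacked matrix col{U₂ᵀ·B_x, B_z} has full row rank, then the matrix [E B] has full row rank, where B = B_x + A_xv·Φ·(I − A_zv·Φ)⁻¹·B_z. -/

import Mathlib

/-!
A left null vector `y` of `[E B]` kills `E`, hence kills `U₁` (because `E V₁ = U₁ S` with `S`
invertible), so `y = w U₂ᵀ` with `w = y U₂`. Then `w (U₂ᵀ B) = 0`, and writing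
`U₂ᵀ B = U₂ᵀ B_x + K B_z` with `K = U₂ᵀ A_xv Φ (I − A_zv Φ)⁻¹` shows that `(w, w K)` is a left
null vector of `col{U₂ᵀ B_x, B_z}`, so `w = 0`.
-/

open Matrix

noncomputable section

/-- A real matrix has full column rank (FCR) iff its rank equals its number of columns. -/
def FCR {m n : Type*} [Fintype m] [Fintype n] (A : Matrix m n ℝ) : Prop :=
  A.rank = Fintype.card n

/-- A real matrix has full row rank (FRR) iff its rank equals its number of rows. -/
def FRR {m n : Type*} [Fintype m] [Fintype n] (A : Matrix m n ℝ) : Prop :=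
  A.rank = Fintype.card m

/-- `E` is an `m × n` real matrix of rank `r` with SVD-partition
`U = [U₁ U₂]`, `V = [V₁ V₂]`, `S`: the matrices `U = [U₁ U₂]` and `V = [V₁ V₂]` are
orthogonal, `S` is an `r × r` diagonal matrix with positive diagonal entries,
and `E = U₁ * S * V₁ᵀ`. -/
def IsSVDPartition {m n r : ℕ} (E : Matrix (Fin m) (Fin n) ℝ)
    (U₁ : Matrix (Fin m) (Fin r) ℝ) (U₂ : Matrix (Fin m) (Fin (m - r)) ℝ)
    (V₁ : Matrix (Fin n) (Fin r) ℝ) (V₂ : Matrix (Fin n) (Fin (n - r)) ℝ)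
    (S : Matrix (Fin r) (Fin r) ℝ) : Prop :=
  r ≤ m ∧ r ≤ n ∧
    (Matrix.fromCols U₁ U₂)ᵀ * Matrix.fromCols U₁ U₂ = 1 ∧
    (Matrix.fromCols V₁ V₂)ᵀ * Matrix.fromCols V₁ V₂ = 1 ∧
    (∃ d : Fin r → ℝ, (∀ i, 0 < d i) ∧ S = Matrix.diagonal d) ∧
    E = U₁ * S * V₁ᵀ ∧ E.rank = r

section FullRowRank

variable {m k p : Type*} [Fintype m] [Fintype k] [Fintype p]

theorem frr_iff_vecMul_eq_zero (A : Matrix m k ℝ) :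
    FRR A ↔ ∀ y : m → ℝ, y ᵥ* A = 0 → y = 0 := by
  rw [FRR, rank_eq_finrank_span_row, ← Set.finrank, eq_comm,
    ← linearIndependent_iff_card_eq_finrank_span, ← vecMul_injective_iff,
    ← coe_vecMulLinear, injective_iff_map_eq_zero]
  rfl

theorem FRR.add_mul {X : Matrix m k ℝ} {Y : Matrix p k ℝ} (h : FRR (fromRows X Y))
    (K : Matrix m p ℝ) : FRR (X + K * Y) := by
  refine (frr_iff_vecMul_eq_zero _).2 fun w hw => ?_
  have hzero : Sum.elim w (w ᵥ* K) ᵥ* fromRows X Y = 0 := by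
    rw [sumElim_vecMul_fromRows, vecMul_vecMul, ← vecMul_add, hw]
  simpa using congrArg (fun x => x ∘ Sum.inl) ((frr_iff_vecMul_eq_zero _).1 h _ hzero)

end FullRowRank

theorem Matrix.fromCols_transpose_mul_self_eq_one {R l m₁ m₂ : Type*} [CommRing R] [Fintype l]
    [DecidableEq m₁] [DecidableEq m₂] {A : Matrix l m₁ R} {B : Matrix l m₂ R}
    (h : (fromCols A B)ᵀ * fromCols A B = 1) : Aᵀ * A = 1 := by
  rw [transpose_fromCols, fromRows_mul_fromCols, ← fromBlocks_one] at h
  exact (fromBlocks_inj.1 h).1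

theorem Matrix.mul_transpose_add_mul_transpose_eq_one {R l m₁ m₂ : Type*} [CommRing R]
    [Fintype l] [Fintype m₁] [Fintype m₂] [DecidableEq l] [DecidableEq m₁] [DecidableEq m₂]
    (e : l ≃ m₁ ⊕ m₂) {A : Matrix l m₁ R} {B : Matrix l m₂ R}
    (h : (fromCols A B)ᵀ * fromCols A B = 1) : A * Aᵀ + B * Bᵀ = 1 := by
  rw [← fromCols_mul_fromRows, ← transpose_fromCols]
  exact (mul_eq_one_comm_of_equiv e.symm).1 h

namespace IsSVDPartition

variable {m n r : ℕ} {E : Matrix (Fin m) (Fin n) ℝ}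
  {U₁ : Matrix (Fin m) (Fin r) ℝ} {U₂ : Matrix (Fin m) (Fin (m - r)) ℝ}
  {V₁ : Matrix (Fin n) (Fin r) ℝ} {V₂ : Matrix (Fin n) (Fin (n - r)) ℝ}
  {S : Matrix (Fin r) (Fin r) ℝ}

theorem isUnit_S (hsvd : IsSVDPartition E U₁ U₂ V₁ V₂ S) : IsUnit S := by
  obtain ⟨-, -, -, -, ⟨d, hd, rfl⟩, -⟩ := hsvd
  rw [isUnit_iff_isUnit_det, det_diagonal]
  exact isUnit_iff_ne_zero.2 (Finset.prod_ne_zero_iff.2 fun i _ => (hd i).ne')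

theorem vecMul_U₁_eq_zero (hsvd : IsSVDPartition E U₁ U₂ V₁ V₂ S) {y : Fin m → ℝ}
    (hy : y ᵥ* E = 0) : y ᵥ* U₁ = 0 := by
  refine vecMul_injective_of_isUnit hsvd.isUnit_S ?_
  obtain ⟨-, -, -, hV, -, rfl, -⟩ := hsvd
  calc (y ᵥ* U₁) ᵥ* S = y ᵥ* (U₁ * S * (V₁ᵀ * V₁)) := by
        rw [fromCols_transpose_mul_self_eq_one hV, Matrix.mul_one, vecMul_vecMul]
    _ = (y ᵥ* (U₁ * S * V₁ᵀ)) ᵥ* V₁ := by simp only [vecMul_vecMul, Matrix.mul_assoc]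
    _ = 0 ᵥ* S := by rw [hy, zero_vecMul, zero_vecMul]

theorem eq_vecMul_U₂_transpose (hsvd : IsSVDPartition E U₁ U₂ V₁ V₂ S) {y : Fin m → ℝ}
    (hy : y ᵥ* U₁ = 0) : y = (y ᵥ* U₂) ᵥ* U₂ᵀ := by
  obtain ⟨hrm, -, hU, -⟩ := hsvd
  have hUUt := mul_transpose_add_mul_transpose_eq_one
    (finSumFinEquiv.trans (finCongr (Nat.add_sub_cancel' hrm))).symm hU
  calc y = y ᵥ* (U₁ * U₁ᵀ + U₂ * U₂ᵀ) := by rw [hUUt, vecMul_one]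
    _ = (y ᵥ* U₂) ᵥ* U₂ᵀ := by
      rw [vecMul_add, ← vecMul_vecMul, ← vecMul_vecMul, hy, zero_vecMul, zero_add]

theorem frr_fromCols (hsvd : IsSVDPartition E U₁ U₂ V₁ V₂ S) {p : Type*} [Fintype p]
    {B : Matrix (Fin m) p ℝ} (hB : FRR (U₂ᵀ * B)) : FRR (fromCols E B) := by
  refine (frr_iff_vecMul_eq_zero _).2 fun y hy => ?_
  rw [vecMul_fromCols, ← Sum.elim_zero_zero, Sum.elim_eq_iff] at hy
  have hyU₂ := hsvd.eq_vecMul_U₂_transpose (hsvd.vecMul_U₁_eq_zero hy.1)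
  have hw : y ᵥ* U₂ = 0 := (frr_iff_vecMul_eq_zero _).1 hB _ <| by
    rw [← vecMul_vecMul, ← hyU₂, hy.2]
  rw [hyU₂, hw, zero_vecMul]

end IsSVDPartition

theorem concat_frr_of_col_frr_general (n r u v z : ℕ)
    (E : Matrix (Fin n) (Fin n) ℝ)
    (U₁ : Matrix (Fin n) (Fin r) ℝ) (U₂ : Matrix (Fin n) (Fin (n - r)) ℝ)
    (V₁ : Matrix (Fin n) (Fin r) ℝ) (V₂ : Matrix (Fin n) (Fin (n - r)) ℝ)
    (S : Matrix (Fin r) (Fin r) ℝ)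
    (hsvd : IsSVDPartition E U₁ U₂ V₁ V₂ S)
    (Bx : Matrix (Fin n) (Fin u) ℝ) (Bz : Matrix (Fin z) (Fin u) ℝ)
    (Axv : Matrix (Fin n) (Fin v) ℝ) (Azv : Matrix (Fin z) (Fin v) ℝ)
    (Φ : Matrix (Fin v) (Fin z) ℝ)
    (h : FRR (Matrix.fromRows (U₂ᵀ * Bx) Bz)) :
    FRR (Matrix.fromCols E (Bx + Axv * Φ * (1 - Azv * Φ)⁻¹ * Bz)) := by
  refine hsvd.frr_fromCols ?_
  rw [Matrix.mul_add, ← Matrix.mul_assoc]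
  exact h.add_mul _

/-- If `col{U₂ᵀ·B_x, B_z}` has full row rank, then `[E  B]` has full row rank,
where `B = B_x + A_xv·Φ·(I − A_zv·Φ)⁻¹·B_z`. -/
theorem concat_frr_of_col_frr (n r u v z : ℕ)
    (E : Matrix (Fin n) (Fin n) ℝ)
    (U₁ : Matrix (Fin n) (Fin r) ℝ) (U₂ : Matrix (Fin n) (Fin (n - r)) ℝ)
    (V₁ : Matrix (Fin n) (Fin r) ℝ) (V₂ : Matrix (Fin n) (Fin (n - r)) ℝ)
    (S : Matrix (Fin r) (Fin r) ℝ)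
    (hsvd : IsSVDPartition E U₁ U₂ V₁ V₂ S)
    (Bx : Matrix (Fin n) (Fin u) ℝ) (Bz : Matrix (Fin z) (Fin u) ℝ)
    (Axv : Matrix (Fin n) (Fin v) ℝ) (Azv : Matrix (Fin z) (Fin v) ℝ)
    (Φ : Matrix (Fin v) (Fin z) ℝ) (hinv : IsUnit (1 - Azv * Φ))
    (h : FRR (Matrix.fromRows (U₂ᵀ * Bx) Bz)) :
    FRR (Matrix.fromCols E (Bx + Axv * Φ * (1 - Azv * Φ)⁻¹ * Bz)) :=
  concat_frr_of_col_frr_general n r u v z E U₁ U₂ V₁ V₂ S hsvd Bx Bz Axv Azv Φ h
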